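/- arXiv:2312.08978 — 2 statements merged into one kernel-verified Lean document; each statement's English description precedes it below -/
import Mathlib

section
/- Let P₀ > 0, κ > 0, ε ≥ 0, α > 0, λ > 0, β > 0, z ≥ 0 and 0 < r_e < r_m be real numbers. Then ∫_{r_e}^{r_m} P₀ κ^ε (ν² + z²)^{αε/2} · 2πβλ ν e^{−πβλ ν²} dν = P₀ πλβ e^{πλβ z²} κ^ε · ( (r_e² + z²)^{αε/2 + 1} E_{−αε/2}(πλβ (r_e² + z²)) − (r_m² + z²)^{αε/2 + 1} E_{−αε/2}(πλβ (r_m² + z²)) ), where E_n(x) = ∫_1^∞ e^{−xt} t^{−n} dt. -/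
open Real MeasureTheory intervalIntegral

/-- The generalized exponential integral `E_n(x) = ∫_1^∞ e^(−xt)/tⁿ dt`. -/
noncomputable def expInt (n x : ℝ) : ℝ :=
  ∫ t in Set.Ici (1 : ℝ), Real.exp (-(x * t)) / t ^ n

/-!
Substituting `u = ν² + z²` turns the integrand into a constant multiple of `e^(−cu) u^p` with
`c = πλβ`, `p = αε/2`, the constant `e^(c z²)` coming from splitting off `e^(−c z²)`. Scaling
`t = u / s` identifies `∫_s^∞ e^(−cu) u^p du` with `s^(p+1) E_{−p}(cs)`, and since the tail
integrals converge, `∫_a^b = ∫_a^∞ − ∫_b^∞`.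
-/

lemma integrableOn_Ioi_exp_neg_mul_mul_rpow (p : ℝ) {c s : ℝ} (hc : 0 < c) (hs : 0 < s) :
    IntegrableOn (fun u : ℝ => exp (-(c * u)) * u ^ p) (Set.Ioi s) := by
  refine integrable_of_isBigO_exp_neg (half_pos hc) ?_ ?_
  · refine (continuous_exp.comp (continuous_const.mul continuous_id).neg).continuousOn.mul
      (continuousOn_id.rpow_const fun u hu => Or.inl (hs.trans_le hu).ne')
  · have hpow := (isLittleO_rpow_exp_pos_mul_atTop p (half_pos hc)).isBigO
    refine ((Asymptotics.isBigO_refl (fun u : ℝ => exp (-(c * u))) _).mul hpow).congr_right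
      fun u => ?_
    rw [← exp_add]
    ring_nf

lemma rpow_add_one_mul_expInt_neg (c p : ℝ) {s : ℝ} (hs : 0 < s) :
    s ^ (p + 1) * expInt (-p) (c * s) = ∫ u in Set.Ioi s, exp (-(c * u)) * u ^ p := by
  have hscale := integral_comp_mul_left_Ioi (fun u : ℝ => exp (-(c * u)) * u ^ p) 1 hs
  rw [mul_one, smul_eq_mul] at hscale
  rw [← mul_inv_cancel_left₀ hs.ne' (∫ u in Set.Ioi s, _), ← hscale, expInt,
    integral_Ici_eq_integral_Ioi, rpow_add_one hs.ne', mul_assoc, mul_left_comm,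
    ← MeasureTheory.integral_const_mul]
  congr 1
  refine setIntegral_congr_fun measurableSet_Ioi fun t ht => ?_
  have ht0 : 0 ≤ t := zero_le_one.trans (le_of_lt ht)
  rw [rpow_neg ht0, div_inv_eq_mul, mul_rpow hs.le ht0]
  ring_nf

lemma integral_exp_neg_mul_mul_rpow (p : ℝ) {a b c : ℝ} (hc : 0 < c) (ha : 0 < a)
    (hb : 0 < b) :
    ∫ u in a..b, exp (-(c * u)) * u ^ p
      = a ^ (p + 1) * expInt (-p) (c * a) - b ^ (p + 1) * expInt (-p) (c * b) := by
  rw [rpow_add_one_mul_expInt_neg c p ha, rpow_add_one_mul_expInt_neg c p hb,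
    integral_Ioi_sub_Ioi' (integrableOn_Ioi_exp_neg_mul_mul_rpow p hc ha)
      (integrableOn_Ioi_exp_neg_mul_mul_rpow p hc hb)]

lemma integral_comp_sq_add_mul_two (g : ℝ → ℝ) (z : ℝ) {a b : ℝ} (ha : 0 ≤ a) (hb : 0 ≤ b) :
    ∫ ν in a..b, g (ν ^ 2 + z ^ 2) * (2 * ν) = ∫ u in (a ^ 2 + z ^ 2)..(b ^ 2 + z ^ 2), g u := by
  refine integral_comp_mul_deriv_of_deriv_nonneg (f := fun ν => ν ^ 2 + z ^ 2)
    (by fun_prop) (fun ν _ => ?_) (fun ν hν => ?_)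
  · simpa using (hasDerivAt_pow 2 ν).add_const (z ^ 2)
  · have : 0 ≤ min a b := le_min ha hb
    linarith [hν.1]

theorem stmt_5_general (P₀ κ ε α lam β z re rm : ℝ)
    (hlam : 0 < lam) (hβ : 0 < β) (hre : 0 < re) (hrerm : re < rm) :
    (∫ ν in re..rm, P₀ * κ ^ ε * (ν ^ 2 + z ^ 2) ^ (α * ε / 2)
        * (2 * Real.pi * β * lam * ν * Real.exp (-(Real.pi * β * lam * ν ^ 2))))
      = P₀ * Real.pi * lam * β * Real.exp (Real.pi * lam * β * z ^ 2) * κ ^ ε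
        * ((re ^ 2 + z ^ 2) ^ (α * ε / 2 + 1)
              * expInt (-(α * ε / 2)) (Real.pi * lam * β * (re ^ 2 + z ^ 2))
            - (rm ^ 2 + z ^ 2) ^ (α * ε / 2 + 1)
              * expInt (-(α * ε / 2)) (Real.pi * lam * β * (rm ^ 2 + z ^ 2))) := by
  set c := π * lam * β
  set p := α * ε / 2
  have hc : 0 < c := by positivity
  have hsubst : ∀ ν : ℝ, P₀ * κ ^ ε * (ν ^ 2 + z ^ 2) ^ p
        * (2 * π * β * lam * ν * exp (-(π * β * lam * ν ^ 2)))
      = P₀ * κ ^ ε * c * exp (c * z ^ 2)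
        * (exp (-(c * (ν ^ 2 + z ^ 2))) * (ν ^ 2 + z ^ 2) ^ p * (2 * ν)) := by
    intro ν
    have hexp : exp (c * z ^ 2) * exp (-(c * (ν ^ 2 + z ^ 2))) = exp (-(π * β * lam * ν ^ 2)) := by
      rw [← exp_add]; congr 1; ring
    rw [← hexp]
    ring
  simp_rw [hsubst]
  rw [intervalIntegral.integral_const_mul,
    integral_comp_sq_add_mul_two (fun u => exp (-(c * u)) * u ^ p) z hre.le (hre.trans hrerm).le,
    integral_exp_neg_mul_mul_rpow p hc (by positivity) (by nlinarith)]
  ring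

/-- Closed form of the fractional-power-control term `P_FPC` in Theorem 1 of the paper:
the mean transmit power `P₀ κ^ε (ν²+z²)^(αε/2)` integrated against the Rayleigh-type
serving-distance density `2πβλ ν e^(−πβλ ν²)` over `[r_e, r_m]` equals the bracketed
exponential-integral expression. -/
theorem stmt_5 (P₀ κ ε α lam β z re rm : ℝ)
    (hP₀ : 0 < P₀) (hκ : 0 < κ) (hε : 0 ≤ ε) (hα : 0 < α) (hlam : 0 < lam)
    (hβ : 0 < β) (hz : 0 ≤ z) (hre : 0 < re) (hrerm : re < rm) :
    (∫ ν in re..rm, P₀ * κ ^ ε * (ν ^ 2 + z ^ 2) ^ (α * ε / 2)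
        * (2 * Real.pi * β * lam * ν * Real.exp (-(Real.pi * β * lam * ν ^ 2))))
      = P₀ * Real.pi * lam * β * Real.exp (Real.pi * lam * β * z ^ 2) * κ ^ ε
        * ((re ^ 2 + z ^ 2) ^ (α * ε / 2 + 1)
              * expInt (-(α * ε / 2)) (Real.pi * lam * β * (re ^ 2 + z ^ 2))
            - (rm ^ 2 + z ^ 2) ^ (α * ε / 2 + 1)
              * expInt (-(α * ε / 2)) (Real.pi * lam * β * (rm ^ 2 + z ^ 2))) :=
  stmt_5_general P₀ κ ε α lam β z re rm hlam hβ hre hrerm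
end

section
/- Let P₀ > 0, P_m > 0, κ > 0, ε > 0, α > 2, λ_b > 0, λ_u > 0, β > 0, z ≥ 0, and 0 < r_e ≤ r_m ≤ τ be real numbers with P₀ κ^ε (r_m² + z²)^{αε/2} = P_m. Then the double integral ∫_{r_e}^{τ} ( ∫_{r_e}^{τ} min( P₀ κ^ε (v² + z²)^{αε/2}, P_m ) · 2πβλ_b v e^{−πβλ_b v²} dv ) · κ⁻¹ r^{−α} · 2πλ_u r dr equals 2πλ_u · ( κ⁻¹ r_e^{2−α} − κ⁻¹ τ^{2−α} ) / (α − 2) · ( P_FPC + P_m ( e^{−πβλ_b r_m²} − e^{−πβλ_b τ²} ) ), where P_FPC = P₀ πλ_b β e^{πλ_b β z²} κ^ε ( (r_e² + z²)^{αε/2+1} E_{−αε/2}(πλ_b β (r_e² + z²)) − (r_m² + z²)^{αε/2+1} E_{−αε/2}(πλ_b β (r_m² + z²)) ) and E_n(x) = ∫_1^∞ e^{−xt} t^{−n} dt. -/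
/-!
Below the cap distance `r_m` the truncated power is `P₀ κ^ε (v² + z²)^{αε/2}`; the substitution
`u = v² + z²` absorbs the Rayleigh density up to the factor `e^{πβλ_b z²}`, and `u = a t` turns the
resulting upper incomplete gamma integrals into `E_{-αε/2}`. Beyond `r_m` the power is the constant
`P_m` and the density integrates to a difference of exponentials. The inner integral does not
depend on `r`, so the outer one reduces to `∫ r^{1-α} dr`.
-/

open Real MeasureTheory intervalIntegral

lemma integrableOn_rpow_mul_exp_neg_mul_Ioi {n c a : ℝ} (hn : -1 < n) (hc : 0 < c)
    (ha : 0 ≤ a) :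
    IntegrableOn (fun u : ℝ => u ^ n * exp (-(c * u))) (Set.Ioi a) := by
  have h := integrableOn_rpow_mul_exp_neg_mul_rpow (p := 1) hn one_pos hc
  simp only [rpow_one, neg_mul] at h
  exact h.mono_set (Set.Ioi_subset_Ioi ha)

lemma setIntegral_Ioi_rpow_mul_exp_neg_mul {n c a : ℝ} (ha : 0 < a) :
    ∫ u in Set.Ioi a, u ^ n * exp (-(c * u)) = a ^ (n + 1) * expInt (-n) (c * a) := by
  have hsubst := integral_comp_mul_left_Ioi' (fun u : ℝ => u ^ n * exp (-(c * u))) 1 ha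
  rw [mul_one, smul_eq_mul] at hsubst
  calc ∫ u in Set.Ioi a, u ^ n * exp (-(c * u))
      = a * ∫ t in Set.Ioi 1, (a * t) ^ n * exp (-(c * (a * t))) := hsubst.symm
    _ = a * ∫ t in Set.Ioi 1, a ^ n * (exp (-(c * a * t)) / t ^ (-n)) := by
      congr 1
      refine setIntegral_congr_fun measurableSet_Ioi fun t ht => ?_
      have ht : (0 : ℝ) < t := lt_trans one_pos ht
      rw [mul_rpow ha.le ht.le, rpow_neg ht.le, div_inv_eq_mul, mul_assoc c]
      ring
    _ = a ^ (n + 1) * expInt (-n) (c * a) := by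
      rw [MeasureTheory.integral_const_mul, expInt, integral_Ici_eq_integral_Ioi,
        rpow_add_one ha.ne']
      ring

lemma integral_rpow_mul_exp_neg_mul {n c a b : ℝ} (hn : -1 < n) (hc : 0 < c) (ha : 0 < a)
    (hb : 0 < b) :
    ∫ u in a..b, u ^ n * exp (-(c * u))
      = a ^ (n + 1) * expInt (-n) (c * a) - b ^ (n + 1) * expInt (-n) (c * b) := by
  rw [← setIntegral_Ioi_rpow_mul_exp_neg_mul ha, ← setIntegral_Ioi_rpow_mul_exp_neg_mul hb,
    integral_Ioi_sub_Ioi' (integrableOn_rpow_mul_exp_neg_mul_Ioi hn hc ha.le)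
      (integrableOn_rpow_mul_exp_neg_mul_Ioi hn hc hb.le)]

lemma integral_rpow_sq_add_sq_mul_rayleigh {p c z a b : ℝ} (hp : 0 ≤ p) (hc : 0 < c)
    (ha : 0 < a ^ 2 + z ^ 2) (hb : 0 < b ^ 2 + z ^ 2) :
    ∫ v in a..b, (v ^ 2 + z ^ 2) ^ p * (2 * c * v * exp (-(c * v ^ 2)))
      = c * exp (c * z ^ 2) * ((a ^ 2 + z ^ 2) ^ (p + 1) * expInt (-p) (c * (a ^ 2 + z ^ 2))
          - (b ^ 2 + z ^ 2) ^ (p + 1) * expInt (-p) (c * (b ^ 2 + z ^ 2))) := by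
  set g : ℝ → ℝ := fun u => u ^ p * exp (-(c * u))
  have hg : Continuous g :=
    (continuous_id.rpow_const fun _ => Or.inr hp).mul (by fun_prop)
  have hsubst := integral_comp_mul_deriv (a := a) (b := b) (f := fun v => v ^ 2 + z ^ 2)
    (fun v _ => by simpa using (hasDerivAt_pow 2 v).add_const (z ^ 2)) (by fun_prop) hg
  have hshift (v : ℝ) : exp (-(c * v ^ 2)) = exp (c * z ^ 2) * exp (-(c * (v ^ 2 + z ^ 2))) := by
    rw [← exp_add]
    congr 1
    ring
  calc ∫ v in a..b, (v ^ 2 + z ^ 2) ^ p * (2 * c * v * exp (-(c * v ^ 2)))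
      = ∫ v in a..b, c * exp (c * z ^ 2) * ((g ∘ fun v => v ^ 2 + z ^ 2) v * (2 * v)) := by
        refine integral_congr fun v _ => ?_
        simp only [g, Function.comp, hshift v]
        ring
    _ = _ := by
      rw [intervalIntegral.integral_const_mul, hsubst,
        integral_rpow_mul_exp_neg_mul (by linarith) hc ha hb]

lemma integral_rayleigh (c a b : ℝ) :
    ∫ v in a..b, 2 * c * v * exp (-(c * v ^ 2)) = exp (-(c * a ^ 2)) - exp (-(c * b ^ 2)) := by
  have hderiv : ∀ v ∈ Set.uIcc a b,
      HasDerivAt (fun v => -exp (-(c * v ^ 2))) (2 * c * v * exp (-(c * v ^ 2))) v := by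
    intro v _
    refine (((hasDerivAt_pow 2 v).const_mul c).fun_neg.exp).fun_neg.congr_deriv ?_
    push_cast
    ring
  rw [integral_eq_sub_of_hasDerivAt hderiv (by apply Continuous.intervalIntegrable; fun_prop)]
  ring

lemma integral_rpow_neg_mul_self {α a b : ℝ} (hα : α ≠ 2) (ha : 0 < a) (hb : 0 < b) :
    ∫ r in a..b, r ^ (-α) * r = (a ^ (2 - α) - b ^ (2 - α)) / (α - 2) := by
  have h0 : (0 : ℝ) ∉ Set.uIcc a b := fun h => by
    rcases Set.mem_uIcc.mp h with h | h <;> linarith [h.1]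
  have hcongr : Set.EqOn (fun r : ℝ => r ^ (-α) * r) (fun r => r ^ (1 - α)) (Set.uIcc a b) :=
    fun r hr => by
      change r ^ (-α) * r = r ^ (1 - α)
      rw [sub_eq_neg_add, rpow_add_one (ne_of_mem_of_not_mem hr h0)]
  have hα' : 1 - α ≠ -1 := fun h => hα (by linarith)
  rw [integral_congr hcongr, integral_rpow (Or.inr ⟨hα', h0⟩),
    show 1 - α + 1 = 2 - α by ring, ← neg_sub α 2, div_neg, ← neg_div, neg_sub]

/-- Mean transmit power under truncated fractional power control with cap distance `m`. -/
lemma integral_min_rpow_mul_rayleigh {K Pm p c z a m b : ℝ} (hK : 0 ≤ K) (hp : 0 ≤ p)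
    (hc : 0 < c) (ha : 0 < a) (ham : a ≤ m) (hmb : m ≤ b)
    (hcap : K * (m ^ 2 + z ^ 2) ^ p = Pm) :
    ∫ v in a..b, min (K * (v ^ 2 + z ^ 2) ^ p) Pm * (2 * c * v * exp (-(c * v ^ 2)))
      = K * (c * exp (c * z ^ 2)
          * ((a ^ 2 + z ^ 2) ^ (p + 1) * expInt (-p) (c * (a ^ 2 + z ^ 2))
            - (m ^ 2 + z ^ 2) ^ (p + 1) * expInt (-p) (c * (m ^ 2 + z ^ 2))))
        + Pm * (exp (-(c * m ^ 2)) - exp (-(c * b ^ 2))) := by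
  have hm : 0 < m := ha.trans_le ham
  have hmono {v w : ℝ} (hv : 0 ≤ v) (hvw : v ≤ w) :
      K * (v ^ 2 + z ^ 2) ^ p ≤ K * (w ^ 2 + z ^ 2) ^ p :=
    mul_le_mul_of_nonneg_left (rpow_le_rpow (by positivity) (by nlinarith) hp) hK
  have hcont : Continuous fun v : ℝ =>
      min (K * (v ^ 2 + z ^ 2) ^ p) Pm * (2 * c * v * exp (-(c * v ^ 2))) :=
    ((continuous_const.mul ((by fun_prop : Continuous fun v : ℝ => v ^ 2 + z ^ 2).rpow_const
      fun _ => Or.inr hp)).min continuous_const).mul (by fun_prop)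
  have hhead : ∫ v in a..m, min (K * (v ^ 2 + z ^ 2) ^ p) Pm * (2 * c * v * exp (-(c * v ^ 2)))
      = ∫ v in a..m, K * ((v ^ 2 + z ^ 2) ^ p * (2 * c * v * exp (-(c * v ^ 2)))) := by
    refine integral_congr fun v hv => ?_
    rw [Set.uIcc_of_le ham] at hv
    rw [min_eq_left (hcap ▸ hmono (ha.le.trans hv.1) hv.2), mul_assoc]
  have htail : ∫ v in m..b, min (K * (v ^ 2 + z ^ 2) ^ p) Pm * (2 * c * v * exp (-(c * v ^ 2)))
      = ∫ v in m..b, Pm * (2 * c * v * exp (-(c * v ^ 2))) := by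
    refine integral_congr fun v hv => ?_
    rw [Set.uIcc_of_le hmb] at hv
    rw [min_eq_right (hcap ▸ hmono hm.le hv.1)]
  rw [← integral_add_adjacent_intervals (hcont.intervalIntegrable a m)
      (hcont.intervalIntegrable m b), hhead, htail, intervalIntegral.integral_const_mul,
    intervalIntegral.integral_const_mul,
    integral_rpow_sq_add_sq_mul_rayleigh hp hc (by positivity) (by positivity), integral_rayleigh]

theorem stmt_7_general (P₀ Pm κ ε α lamb lamu β z re rm τ : ℝ)
    (hP₀ : 0 < P₀) (hκ : 0 < κ) (hε : 0 < ε) (hα : 2 < α)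
    (hlamb : 0 < lamb) (hβ : 0 < β)
    (hre : 0 < re) (hrerm : re ≤ rm) (hrmτ : rm ≤ τ)
    (hcap : P₀ * κ ^ ε * (rm ^ 2 + z ^ 2) ^ (α * ε / 2) = Pm)
    (PFPC : ℝ)
    (hPFPC : PFPC = P₀ * Real.pi * lamb * β * Real.exp (Real.pi * lamb * β * z ^ 2) * κ ^ ε
      * ((re ^ 2 + z ^ 2) ^ (α * ε / 2 + 1)
            * expInt (-(α * ε / 2)) (Real.pi * lamb * β * (re ^ 2 + z ^ 2))
          - (rm ^ 2 + z ^ 2) ^ (α * ε / 2 + 1)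
            * expInt (-(α * ε / 2)) (Real.pi * lamb * β * (rm ^ 2 + z ^ 2)))) :
    (∫ r in re..τ,
        (∫ v in re..τ, min (P₀ * κ ^ ε * (v ^ 2 + z ^ 2) ^ (α * ε / 2)) Pm
            * (2 * Real.pi * β * lamb * v * Real.exp (-(Real.pi * β * lamb * v ^ 2))))
          * (κ⁻¹ * r ^ (-α)) * (2 * Real.pi * lamu * r))
      = 2 * Real.pi * lamu * ((κ⁻¹ * re ^ (2 - α) - κ⁻¹ * τ ^ (2 - α)) / (α - 2))
        * (PFPC + Pm * (Real.exp (-(Real.pi * β * lamb * rm ^ 2))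
            - Real.exp (-(Real.pi * β * lamb * τ ^ 2)))) := by
  rw [mul_right_comm π lamb β] at hPFPC
  set c := π * β * lamb
  have hrayleigh (v : ℝ) : 2 * π * β * lamb * v * exp (-(c * v ^ 2))
      = 2 * c * v * exp (-(c * v ^ 2)) := by ring
  set I := PFPC + Pm * (exp (-(c * rm ^ 2)) - exp (-(c * τ ^ 2))) with hI
  have hinner : ∫ v in re..τ, min (P₀ * κ ^ ε * (v ^ 2 + z ^ 2) ^ (α * ε / 2)) Pm
      * (2 * c * v * exp (-(c * v ^ 2))) = I := by
    rw [integral_min_rpow_mul_rayleigh (by positivity) (by positivity) (by positivity) hre hrerm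
      hrmτ hcap, hI, hPFPC]
    ring
  simp only [hrayleigh, hinner]
  have houter (r : ℝ) : I * (κ⁻¹ * r ^ (-α)) * (2 * π * lamu * r)
      = I * κ⁻¹ * (2 * π * lamu) * (r ^ (-α) * r) := by ring
  simp only [houter]
  rw [intervalIntegral.integral_const_mul,
    integral_rpow_neg_mul_self hα.ne' hre (hre.trans_le (hrerm.trans hrmτ))]
  ring

/-- Deterministic core of Theorem 1 of the paper (mean uplink EMF exposure): the iterated
integral of the mean truncated-fractional-power-control transmit power, weighted by the
user-to-user path gain `κ⁻¹ r^(−α)` and intensity `2πλ_u r` over the annulus `r_e < r < τ`,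
equals `2πλ_u (κ⁻¹ r_e^(2−α) − κ⁻¹ τ^(2−α))/(α−2) · (P_FPC + P_m(e^(−πβλ_b r_m²) − e^(−πβλ_b τ²)))`. -/
theorem stmt_7 (P₀ Pm κ ε α lamb lamu β z re rm τ : ℝ)
    (hP₀ : 0 < P₀) (hPm : 0 < Pm) (hκ : 0 < κ) (hε : 0 < ε) (hα : 2 < α)
    (hlamb : 0 < lamb) (hlamu : 0 < lamu) (hβ : 0 < β) (hz : 0 ≤ z)
    (hre : 0 < re) (hrerm : re ≤ rm) (hrmτ : rm ≤ τ)
    (hcap : P₀ * κ ^ ε * (rm ^ 2 + z ^ 2) ^ (α * ε / 2) = Pm)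
    (PFPC : ℝ)
    (hPFPC : PFPC = P₀ * Real.pi * lamb * β * Real.exp (Real.pi * lamb * β * z ^ 2) * κ ^ ε
      * ((re ^ 2 + z ^ 2) ^ (α * ε / 2 + 1)
            * expInt (-(α * ε / 2)) (Real.pi * lamb * β * (re ^ 2 + z ^ 2))
          - (rm ^ 2 + z ^ 2) ^ (α * ε / 2 + 1)
            * expInt (-(α * ε / 2)) (Real.pi * lamb * β * (rm ^ 2 + z ^ 2)))) :
    (∫ r in re..τ,
        (∫ v in re..τ, min (P₀ * κ ^ ε * (v ^ 2 + z ^ 2) ^ (α * ε / 2)) Pm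
            * (2 * Real.pi * β * lamb * v * Real.exp (-(Real.pi * β * lamb * v ^ 2))))
          * (κ⁻¹ * r ^ (-α)) * (2 * Real.pi * lamu * r))
      = 2 * Real.pi * lamu * ((κ⁻¹ * re ^ (2 - α) - κ⁻¹ * τ ^ (2 - α)) / (α - 2))
        * (PFPC + Pm * (Real.exp (-(Real.pi * β * lamb * rm ^ 2))
            - Real.exp (-(Real.pi * β * lamb * τ ^ 2)))) :=
  stmt_7_general P₀ Pm κ ε α lamb lamu β z re rm τ hP₀ hκ hε hα hlamb hβ hre hrerm hrmτ hcap PFPC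
    hPFPC
end
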